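/- arXiv:2601.16719 — 5 statements merged into one kernel-verified Lean document; each statement's English description precedes it below -/
import Mathlib

section
/- If the initial state of the coupled adoption-opinion system lies in [0,1]^{7n} and satisfies the normalization s(0) + a^{[1]}(0) + a^{[2]}(0) + d^{[1]}(0) + d^{[2]}(0) = 1 (entrywise), then for all times t ≥ 0 the state remains in [0,1]^{7n} and the normalization s(t) + Σ_k (a^{[k]}(t) + d^{[k]}(t)) = 1 holds. -/
/-!
The compartments `s, a^{[k]}, d^{[k]}` only exchange mass, so their total is conserved exactly.
Each update keeps them nonnegative: `s` is multiplied by `1 - Σ_k β^{[k]} x^{[k]} (W a^{[k]})`,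
whose subtracted part is at most `β^{[1]} + β^{[2]} < 1`; `a^{[k]}` loses at most the fraction
`δ^{[k]} ≤ 1` of itself and `d^{[k]}` at most the fraction `γ^{[ℓ]} x^{[ℓ]} ≤ 1`. Nonnegative
compartments of total one lie in `[0,1]`, and the opinion update is a convex combination of
`x^{[k]}(0)`, `W̃ x^{[k]}` and `W a^{[k]}`, all in `[0,1]`.
-/

open Finset Set

lemma weighted_sum_mem_Icc {ι : Type*} [Fintype ι] {w v : ι → ℝ} (hw : ∀ j, 0 ≤ w j)
    (hw1 : ∑ j, w j = 1) (hv : ∀ j, v j ∈ Icc (0 : ℝ) 1) : ∑ j, w j * v j ∈ Icc (0 : ℝ) 1 :=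
  (convex_Icc 0 1).sum_mem (fun j _ => hw j) hw1 (fun j _ => hv j)

lemma convex_comb_three_mem_Icc {p q r u v w : ℝ} (hp : 0 ≤ p) (hq : 0 ≤ q) (hr : 0 ≤ r)
    (hpqr : p + q + r = 1) (hu : u ∈ Icc (0 : ℝ) 1) (hv : v ∈ Icc (0 : ℝ) 1)
    (hw : w ∈ Icc (0 : ℝ) 1) : p * u + q * v + r * w ∈ Icc (0 : ℝ) 1 := by
  simpa [Fin.sum_univ_three, add_assoc] using
    weighted_sum_mem_Icc (w := ![p, q, r]) (v := ![u, v, w])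
      (fun j => by fin_cases j <;> assumption) (by simpa [Fin.sum_univ_three, add_assoc] using hpqr)
      (fun j => by fin_cases j <;> assumption)

lemma compartments_mem_Icc {ι : Type*} [Fintype ι] {S : ℝ} {A D : ι → ℝ}
    (hS : 0 ≤ S) (hA : ∀ k, 0 ≤ A k) (hD : ∀ k, 0 ≤ D k) (htot : S + ∑ k, (A k + D k) = 1) :
    S ∈ Icc (0 : ℝ) 1 ∧ ∀ k, A k ∈ Icc (0 : ℝ) 1 ∧ D k ∈ Icc (0 : ℝ) 1 := by
  have hAD : ∀ k, 0 ≤ A k + D k := fun k => add_nonneg (hA k) (hD k)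
  have hle : ∀ k, A k + D k ≤ ∑ k, (A k + D k) := fun k =>
    single_le_sum (f := fun k => A k + D k) (fun k _ => hAD k) (mem_univ k)
  have hsum : 0 ≤ ∑ k, (A k + D k) := sum_nonneg fun k _ => hAD k
  exact ⟨⟨hS, by linarith⟩, fun k =>
    ⟨⟨hA k, by linarith [hle k, hD k]⟩, ⟨hD k, by linarith [hle k, hA k]⟩⟩⟩

section AdoptionOpinion

variable {n : ℕ} {W Wt : Matrix (Fin n) (Fin n) ℝ} {β δ γ lam ξ : Fin 2 → Fin n → ℝ}
  {s : ℕ → Fin n → ℝ} {a d x : Fin 2 → ℕ → Fin n → ℝ}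

lemma total_succ
    (hs : ∀ t i, s (t + 1) i =
      s t i - s t i * ∑ k, β k i * x k t i * ∑ j, W i j * a k t j)
    (ha : ∀ (k : Fin 2) (t : ℕ) (i : Fin n), a k (t + 1) i =
      a k t i + β k i * x k t i * s t i * (∑ j, W i j * a k t j)
        - δ k i * a k t i + γ k i * x k t i * d (1 - k) t i)
    (hd : ∀ (k : Fin 2) (t : ℕ) (i : Fin n), d k (t + 1) i =
      d k t i - γ (1 - k) i * x (1 - k) t i * d k t i + δ k i * a k t i)
    (t : ℕ) (i : Fin n) :
    s (t + 1) i + ∑ k, (a k (t + 1) i + d k (t + 1) i) = s t i + ∑ k, (a k t i + d k t i) := by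
  simp only [Fin.sum_univ_two, hs, ha, hd, Fin.isValue, sub_zero, sub_self]
  ring

lemma total_eq_one
    (hs : ∀ t i, s (t + 1) i =
      s t i - s t i * ∑ k, β k i * x k t i * ∑ j, W i j * a k t j)
    (ha : ∀ (k : Fin 2) (t : ℕ) (i : Fin n), a k (t + 1) i =
      a k t i + β k i * x k t i * s t i * (∑ j, W i j * a k t j)
        - δ k i * a k t i + γ k i * x k t i * d (1 - k) t i)
    (hd : ∀ (k : Fin 2) (t : ℕ) (i : Fin n), d k (t + 1) i =
      d k t i - γ (1 - k) i * x (1 - k) t i * d k t i + δ k i * a k t i)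
    (hnorm : ∀ i, s 0 i + ∑ k, (a k 0 i + d k 0 i) = 1) (t : ℕ) (i : Fin n) :
    s t i + ∑ k, (a k t i + d k t i) = 1 := by
  induction t with
  | zero => exact hnorm i
  | succ t ih => rw [total_succ hs ha hd, ih]

lemma susceptible_succ_nonneg {t : ℕ} {i : Fin n} (hβ : ∀ k, 0 ≤ β k i) (hβ1 : β 0 i + β 1 i ≤ 1)
    (hs : s (t + 1) i = s t i - s t i * ∑ k, β k i * x k t i * ∑ j, W i j * a k t j)
    (hst : 0 ≤ s t i) (hxt : ∀ k, x k t i ∈ Icc (0 : ℝ) 1)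
    (hWa : ∀ k, ∑ j, W i j * a k t j ∈ Icc (0 : ℝ) 1) : 0 ≤ s (t + 1) i := by
  have hterm : ∀ k, β k i * x k t i * ∑ j, W i j * a k t j ≤ β k i := fun k =>
    calc β k i * x k t i * ∑ j, W i j * a k t j ≤ β k i * x k t i :=
          mul_le_of_le_one_right (mul_nonneg (hβ k) (hxt k).1) (hWa k).2
      _ ≤ β k i := mul_le_of_le_one_right (hβ k) (hxt k).2
  have hQ : ∑ k, β k i * x k t i * ∑ j, W i j * a k t j ≤ 1 := by
    calc _ ≤ ∑ k, β k i := sum_le_sum fun k _ => hterm k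
      _ ≤ 1 := by rwa [Fin.sum_univ_two]
  rw [hs, ← mul_one_sub]
  exact mul_nonneg hst (sub_nonneg.mpr hQ)

lemma adopters_succ_nonneg {k : Fin 2} {t : ℕ} {i : Fin n} (hβ : 0 ≤ β k i) (hδ : δ k i ≤ 1)
    (hγ : 0 ≤ γ k i)
    (ha : a k (t + 1) i = a k t i + β k i * x k t i * s t i * (∑ j, W i j * a k t j)
        - δ k i * a k t i + γ k i * x k t i * d (1 - k) t i)
    (hat : 0 ≤ a k t i) (hst : 0 ≤ s t i) (hxt : 0 ≤ x k t i) (hdt : 0 ≤ d (1 - k) t i)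
    (hWa : 0 ≤ ∑ j, W i j * a k t j) : 0 ≤ a k (t + 1) i := by
  have hloss : δ k i * a k t i ≤ a k t i := mul_le_of_le_one_left hat hδ
  have hadopt : 0 ≤ β k i * x k t i * s t i * (∑ j, W i j * a k t j) :=
    mul_nonneg (mul_nonneg (mul_nonneg hβ hxt) hst) hWa
  have hreturn : 0 ≤ γ k i * x k t i * d (1 - k) t i := mul_nonneg (mul_nonneg hγ hxt) hdt
  rw [ha]
  linarith

lemma dissatisfied_succ_nonneg {k : Fin 2} {t : ℕ} {i : Fin n} (hγ : γ (1 - k) i ≤ 1)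
    (hδ : 0 ≤ δ k i)
    (hd : d k (t + 1) i = d k t i - γ (1 - k) i * x (1 - k) t i * d k t i + δ k i * a k t i)
    (hdt : 0 ≤ d k t i) (hat : 0 ≤ a k t i) (hxt : x (1 - k) t i ∈ Icc (0 : ℝ) 1) :
    0 ≤ d k (t + 1) i := by
  have hγx : γ (1 - k) i * x (1 - k) t i ≤ 1 := mul_le_one₀ hγ hxt.1 hxt.2
  have hkeep : 0 ≤ d k t i * (1 - γ (1 - k) i * x (1 - k) t i) :=
    mul_nonneg hdt (sub_nonneg.mpr hγx)
  rw [hd]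
  nlinarith [mul_nonneg hδ hat]

lemma opinion_succ_mem_Icc {k : Fin 2} {t : ℕ} {i : Fin n} (hlam : 0 ≤ lam k i)
    (hξ : 0 ≤ ξ k i) (hlx : lam k i + ξ k i ≤ 1)
    (hx : x k (t + 1) i = (1 - lam k i - ξ k i) * x k 0 i + lam k i * ∑ j, Wt i j * x k t j
        + ξ k i * ∑ j, W i j * a k t j)
    (hx0 : x k 0 i ∈ Icc (0 : ℝ) 1) (hWtx : ∑ j, Wt i j * x k t j ∈ Icc (0 : ℝ) 1)
    (hWa : ∑ j, W i j * a k t j ∈ Icc (0 : ℝ) 1) : x k (t + 1) i ∈ Icc (0 : ℝ) 1 := by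
  rw [hx]
  exact convex_comb_three_mem_Icc (by linarith) hlam hξ (by ring) hx0 hWtx hWa

end AdoptionOpinion

/-- Proposition 1: invariance of `[0,1]^{7n}` and of the normalization
`s(t) + Σ_k (a^{[k]}(t) + d^{[k]}(t)) = 1` under the coupled adoption-opinion
dynamics. -/
theorem stmt0 {n : ℕ} (W Wt : Matrix (Fin n) (Fin n) ℝ)
    (β δ γ lam ξ : Fin 2 → Fin n → ℝ)
    (s : ℕ → Fin n → ℝ) (a d x : Fin 2 → ℕ → Fin n → ℝ)
    (hW : ∀ i j, 0 ≤ W i j) (hWrow : ∀ i, ∑ j, W i j = 1)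
    (hWt : ∀ i j, 0 ≤ Wt i j) (hWtrow : ∀ i, ∑ j, Wt i j = 1)
    (hβnn : ∀ k i, 0 ≤ β k i)
    (hβ : ∀ i, 0 < β 0 i + β 1 i ∧ β 0 i + β 1 i < 1)
    (hδ : ∀ k i, 0 ≤ δ k i ∧ δ k i ≤ 1)
    (hγ : ∀ k i, 0 < γ k i ∧ γ k i < 1)
    (hlam : ∀ k i, 0 ≤ lam k i) (hξ : ∀ k i, 0 ≤ ξ k i)
    (hlx : ∀ k i, lam k i + ξ k i < 1)
    (hs : ∀ t i, s (t + 1) i =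
      s t i - s t i * ∑ k, β k i * x k t i * ∑ j, W i j * a k t j)
    (ha : ∀ (k : Fin 2) (t : ℕ) (i : Fin n), a k (t + 1) i =
      a k t i + β k i * x k t i * s t i * (∑ j, W i j * a k t j)
        - δ k i * a k t i + γ k i * x k t i * d (1 - k) t i)
    (hd : ∀ (k : Fin 2) (t : ℕ) (i : Fin n), d k (t + 1) i =
      d k t i - γ (1 - k) i * x (1 - k) t i * d k t i + δ k i * a k t i)
    (hx : ∀ (k : Fin 2) (t : ℕ) (i : Fin n), x k (t + 1) i =
      (1 - lam k i - ξ k i) * x k 0 i + lam k i * ∑ j, Wt i j * x k t j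
        + ξ k i * ∑ j, W i j * a k t j)
    (h0 : (∀ i, s 0 i ∈ Set.Icc (0 : ℝ) 1) ∧
      (∀ k i, a k 0 i ∈ Set.Icc (0 : ℝ) 1 ∧ d k 0 i ∈ Set.Icc (0 : ℝ) 1 ∧
        x k 0 i ∈ Set.Icc (0 : ℝ) 1))
    (hnorm : ∀ i, s 0 i + ∑ k, (a k 0 i + d k 0 i) = 1) :
    ∀ t : ℕ,
      ((∀ i, s t i ∈ Set.Icc (0 : ℝ) 1) ∧
        (∀ k i, a k t i ∈ Set.Icc (0 : ℝ) 1 ∧ d k t i ∈ Set.Icc (0 : ℝ) 1 ∧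
          x k t i ∈ Set.Icc (0 : ℝ) 1)) ∧
      (∀ i, s t i + ∑ k, (a k t i + d k t i) = 1) := by
  intro t
  have htot := total_eq_one hs ha hd hnorm
  induction t with
  | zero => exact ⟨h0, hnorm⟩
  | succ t ih =>
    obtain ⟨⟨hst, hadx⟩, -⟩ := ih
    have hWa : ∀ k i, ∑ j, W i j * a k t j ∈ Set.Icc (0 : ℝ) 1 := fun k i =>
      weighted_sum_mem_Icc (hW i) (hWrow i) fun j => (hadx k j).1
    have hWtx : ∀ k i, ∑ j, Wt i j * x k t j ∈ Set.Icc (0 : ℝ) 1 := fun k i =>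
      weighted_sum_mem_Icc (hWt i) (hWtrow i) fun j => (hadx k j).2.2
    have hs' : ∀ i, 0 ≤ s (t + 1) i := fun i =>
      susceptible_succ_nonneg (hβnn · i) (hβ i).2.le (hs t i) (hst i).1
        (fun k => (hadx k i).2.2) (hWa · i)
    have ha' : ∀ k i, 0 ≤ a k (t + 1) i := fun k i =>
      adopters_succ_nonneg (hβnn k i) (hδ k i).2 (hγ k i).1.le (ha k t i) (hadx k i).1.1
        (hst i).1 (hadx k i).2.2.1 (hadx (1 - k) i).2.1.1 (hWa k i).1
    have hd' : ∀ k i, 0 ≤ d k (t + 1) i := fun k i =>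
      dissatisfied_succ_nonneg (hγ (1 - k) i).2.le (hδ k i).1 (hd k t i) (hadx k i).2.1.1
        (hadx k i).1.1 (hadx (1 - k) i).2.2
    have hx' : ∀ k i, x k (t + 1) i ∈ Set.Icc (0 : ℝ) 1 := fun k i =>
      opinion_succ_mem_Icc (hlam k i) (hξ k i) (hlx k i).le (hx k t i) (h0.2 k i).2.2
        (hWtx k i) (hWa k i)
    have hsad i := compartments_mem_Icc (hs' i) (ha' · i) (hd' · i) (htot (t + 1) i)
    exact ⟨⟨fun i => (hsad i).1, fun k i => ⟨((hsad i).2 k).1, ((hsad i).2 k).2, hx' k i⟩⟩,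
      htot (t + 1)⟩
end

section
/- The adoption-free equilibrium y_e = (1, 0, 0, 0, 0, x_e^{[1]}, x_e^{[2]}) of the coupled adoption-opinion dynamics is not asymptotically stable: for every ε ∈ (0,1) there is an initial condition at sup-norm distance exactly ε from y_e whose trajectory satisfies ‖y(t) − y_e‖_∞ ≥ ε for all t ≥ 0. -/
/-!
Every quantity of the model stays in the simplex-like region where `s, aᵏ, dᵏ ≥ 0`,
`xᵏ ∈ [0, 1]` and `s + a¹ + a² + d¹ + d² = 1`: neighbourhood averages of quantities in
`[0, 1]` stay in `[0, 1]`, so each update is a nonnegative correction or a convex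
combination, and the flows between compartments cancel in the total. On this region the
susceptible fraction only decreases, so `s(t) ≤ s(0) = 1 − ε` and `|s(t) − 1| ≥ ε` forever.
-/

open Matrix Finset Set

section

variable {ι : Type*}

theorem sum_mul_mem_Icc [Fintype ι] {w v : ι → ℝ} (hw : ∀ j, 0 ≤ w j) (hw1 : ∑ j, w j ≤ 1)
    (hv : ∀ j, v j ∈ Icc (0 : ℝ) 1) : ∑ j, w j * v j ∈ Icc (0 : ℝ) 1 :=
  ⟨sum_nonneg fun j _ => mul_nonneg (hw j) (hv j).1,
    (sum_le_sum fun j _ => mul_le_of_le_one_right (hw j) (hv j).2).trans hw1⟩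

def IsFeasibleState (s : ι → ℝ) (a d x : Fin 2 → ι → ℝ) : Prop :=
  ∀ i, 0 ≤ s i ∧ (∀ k, 0 ≤ a k i ∧ 0 ≤ d k i ∧ x k i ∈ Icc (0 : ℝ) 1) ∧
    s i + ∑ k, a k i + ∑ k, d k i = 1

theorem IsFeasibleState.adopters_mem_Icc {s : ι → ℝ} {a d x : Fin 2 → ι → ℝ}
    (h : IsFeasibleState s a d x) (k : Fin 2) (i : ι) : a k i ∈ Icc (0 : ℝ) 1 := by
  obtain ⟨hs, hk, htotal⟩ := h i
  have hd : 0 ≤ ∑ k, d k i := sum_nonneg fun k _ => (hk k).2.1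
  refine ⟨(hk k).1, ?_⟩
  calc a k i ≤ ∑ k, a k i := single_le_sum (fun k _ => (hk k).1) (mem_univ k)
    _ ≤ 1 := by linarith

theorem IsFeasibleState.neighbour_adoption_mem_Icc [Fintype ι] {W : Matrix ι ι ℝ}
    {s : ι → ℝ} {a d x : Fin 2 → ι → ℝ} (h : IsFeasibleState s a d x)
    (hW : ∀ i j, 0 ≤ W i j) (hWrow : ∀ i, ∑ j, W i j = 1) (k : Fin 2) (i : ι) :
    ∑ j, W i j * a k j ∈ Icc (0 : ℝ) 1 :=
  sum_mul_mem_Icc (hW i) (hWrow i).le fun j => h.adopters_mem_Icc k j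

theorem IsFeasibleState.susceptible_succ_mem_Icc [Fintype ι] {W : Matrix ι ι ℝ}
    {β : Fin 2 → ι → ℝ} {s : ι → ℝ} {a d x : Fin 2 → ι → ℝ} (h : IsFeasibleState s a d x)
    (hW : ∀ i j, 0 ≤ W i j) (hWrow : ∀ i, ∑ j, W i j = 1)
    (hβnn : ∀ k i, 0 ≤ β k i) (hβ : ∀ i, ∑ k, β k i ≤ 1) (i : ι) :
    s i - s i * ∑ k, β k i * x k i * ∑ j, W i j * a k j ∈ Icc (0 : ℝ) (s i) := by
  have hrate : ∑ k, β k i * x k i * ∑ j, W i j * a k j ∈ Icc (0 : ℝ) 1 := by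
    simp_rw [mul_assoc]
    exact sum_mul_mem_Icc (hβnn · i) (hβ i) fun k =>
      unitInterval.mul_mem ((h i).2.1 k).2.2 (h.neighbour_adoption_mem_Icc hW hWrow k i)
  have hs := (h i).1
  constructor <;> nlinarith [hrate.1, hrate.2]

theorem IsFeasibleState.succ [Fintype ι] {W Wt : Matrix ι ι ℝ}
    {β δ γ lam ξ : Fin 2 → ι → ℝ} {s s' : ι → ℝ} {a d x a' d' x' x₀ : Fin 2 → ι → ℝ}
    (h : IsFeasibleState s a d x)
    (hW : ∀ i j, 0 ≤ W i j) (hWrow : ∀ i, ∑ j, W i j = 1)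
    (hWt : ∀ i j, 0 ≤ Wt i j) (hWtrow : ∀ i, ∑ j, Wt i j = 1)
    (hβnn : ∀ k i, 0 ≤ β k i) (hβ : ∀ i, ∑ k, β k i ≤ 1)
    (hδ : ∀ k i, 0 ≤ δ k i ∧ δ k i ≤ 1) (hγ : ∀ k i, 0 ≤ γ k i ∧ γ k i ≤ 1)
    (hlam : ∀ k i, 0 ≤ lam k i) (hξ : ∀ k i, 0 ≤ ξ k i)
    (hlx : ∀ k i, lam k i + ξ k i ≤ 1) (hx₀ : ∀ k i, x₀ k i ∈ Icc (0 : ℝ) 1)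
    (hs : ∀ i, s' i = s i - s i * ∑ k, β k i * x k i * ∑ j, W i j * a k j)
    (ha : ∀ k i, a' k i = a k i + β k i * x k i * s i * (∑ j, W i j * a k j)
        - δ k i * a k i + γ k i * x k i * d (1 - k) i)
    (hd : ∀ k i, d' k i = d k i - γ (1 - k) i * x (1 - k) i * d k i + δ k i * a k i)
    (hx : ∀ k i, x' k i = (1 - lam k i - ξ k i) * x₀ k i + lam k i * ∑ j, Wt i j * x k j
        + ξ k i * ∑ j, W i j * a k j) :
    IsFeasibleState s' a' d' x' := by
  intro i
  obtain ⟨hsi, hk, htotal⟩ := h i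
  have hA := h.neighbour_adoption_mem_Icc hW hWrow
  have hX : ∀ k, ∑ j, Wt i j * x k j ∈ Icc (0 : ℝ) 1 := fun k =>
    sum_mul_mem_Icc (hWt i) (hWtrow i).le fun j => ((h j).2.1 k).2.2
  refine ⟨hs i ▸ (h.susceptible_succ_mem_Icc hW hWrow hβnn hβ i).1, fun k => ⟨?_, ?_, ?_⟩, ?_⟩
  · obtain ⟨hak, -, hxk⟩ := hk k
    have hgain : 0 ≤ β k i * x k i * s i * (∑ j, W i j * a k j) :=
      mul_nonneg (mul_nonneg (mul_nonneg (hβnn k i) hxk.1) hsi) (hA k i).1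
    have hswitch : 0 ≤ γ k i * x k i * d (1 - k) i :=
      mul_nonneg (mul_nonneg (hγ k i).1 hxk.1) (hk (1 - k)).2.1
    have hleave : δ k i * a k i ≤ a k i := mul_le_of_le_one_left hak (hδ k i).2
    rw [ha]; linarith
  · have hswitch : γ (1 - k) i * x (1 - k) i * d k i ≤ d k i :=
      mul_le_of_le_one_left (hk k).2.1
        (unitInterval.mul_mem ⟨(hγ (1 - k) i).1, (hγ (1 - k) i).2⟩ (hk (1 - k)).2.2).2
    have hleave : 0 ≤ δ k i * a k i := mul_nonneg (hδ k i).1 (hk k).1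
    rw [hd]; linarith
  · obtain ⟨h₀, h₀'⟩ := hx₀ k i
    obtain ⟨hX₀, hX₁⟩ := hX k
    obtain ⟨hA₀, hA₁⟩ := hA k i
    have hl := hlam k i; have hξk := hξ k i; have hlxk := hlx k i
    rw [hx]
    constructor
    · have := mul_nonneg (sub_nonneg.2 hlxk) h₀
      have := mul_nonneg hl hX₀
      have := mul_nonneg hξk hA₀
      linarith
    · have := mul_le_of_le_one_right (sub_nonneg.2 hlxk) h₀'
      have := mul_le_of_le_one_right hl hX₁
      have := mul_le_of_le_one_right hξk hA₁
      linarith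
  · simp only [Fin.sum_univ_two, hs i, ha, hd] at htotal ⊢
    simp only [show (1 : Fin 2) - 0 = 1 from rfl, show (1 : Fin 2) - 1 = 0 from rfl]
    linear_combination htotal

end

theorem stmt5_general {n : ℕ} (hn : 0 < n) (W Wt : Matrix (Fin n) (Fin n) ℝ)
    (β δ γ lam ξ : Fin 2 → Fin n → ℝ)
    (s : ℕ → Fin n → ℝ) (a d x : Fin 2 → ℕ → Fin n → ℝ) (ε : ℝ)
    (hε : ε ∈ Set.Ioo (0 : ℝ) 1)
    (hW : ∀ i j, 0 ≤ W i j) (hWrow : ∀ i, ∑ j, W i j = 1)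
    (hWt : ∀ i j, 0 ≤ Wt i j) (hWtrow : ∀ i, ∑ j, Wt i j = 1)
    (hβnn : ∀ k i, 0 ≤ β k i) (hβ : ∀ i, 0 < β 0 i + β 1 i ∧ β 0 i + β 1 i < 1)
    (hδ : ∀ k i, 0 ≤ δ k i ∧ δ k i ≤ 1) (hγ : ∀ k i, 0 < γ k i ∧ γ k i < 1)
    (hlam : ∀ k i, 0 ≤ lam k i) (hξ : ∀ k i, 0 ≤ ξ k i)
    (hlx : ∀ k i, lam k i + ξ k i < 1)
    (xe : Fin 2 → Fin n → ℝ)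
    (hxe01 : ∀ k i, xe k i ∈ Set.Icc (0 : ℝ) 1)
    -- dynamics
    (hs : ∀ t i, s (t + 1) i =
      s t i - s t i * ∑ k, β k i * x k t i * ∑ j, W i j * a k t j)
    (ha : ∀ (k : Fin 2) (t : ℕ) (i : Fin n), a k (t + 1) i =
      a k t i + β k i * x k t i * s t i * (∑ j, W i j * a k t j)
        - δ k i * a k t i + γ k i * x k t i * d (1 - k) t i)
    (hd : ∀ (k : Fin 2) (t : ℕ) (i : Fin n), d k (t + 1) i =
      d k t i - γ (1 - k) i * x (1 - k) t i * d k t i + δ k i * a k t i)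
    (hx : ∀ (k : Fin 2) (t : ℕ) (i : Fin n), x k (t + 1) i =
      (1 - lam k i - ξ k i) * x k 0 i + lam k i * ∑ j, Wt i j * x k t j
        + ξ k i * ∑ j, W i j * a k t j)
    -- perturbed initial condition
    (hs0 : ∀ i, s 0 i = 1 - ε)
    (ha10 : ∀ i, a 0 0 i = ε) (ha20 : ∀ i, a 1 0 i = 0)
    (hd0 : ∀ (k : Fin 2) (i : Fin n), d k 0 i = 0)
    (hx0 : ∀ (k : Fin 2) (i : Fin n), x k 0 i = xe k i) :
    -- ‖y(0) − y_e‖_∞ = ε : every component deviation is ≤ ε and some equals ε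
    ((∀ i : Fin n, |s 0 i - 1| ≤ ε ∧
        ∀ k : Fin 2, |a k 0 i - 0| ≤ ε ∧ |d k 0 i - 0| ≤ ε ∧ |x k 0 i - xe k i| ≤ ε) ∧
      ∃ i : Fin n, |s 0 i - 1| = ε) ∧
    -- the trajectory never returns ε-close to y_e
    (∀ t : ℕ, ∃ i : Fin n, |s t i - 1| ≥ ε) := by
  obtain ⟨hε₀, hε₁⟩ := hε
  have hβ' : ∀ i, ∑ k, β k i ≤ 1 := fun i => by simpa [Fin.sum_univ_two] using (hβ i).2.le
  have hfeas : ∀ t, IsFeasibleState (s t) (a · t) (d · t) (x · t) := by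
    intro t
    induction t with
    | zero =>
      intro i
      refine ⟨by rw [hs0]; linarith, fun k => ?_, ?_⟩
      · fin_cases k <;> simp [ha10, ha20, hd0, hx0, hxe01, hε₀.le]
      · simp [Fin.sum_univ_two, hs0, ha10, ha20, hd0]
    | succ t ih =>
      exact ih.succ hW hWrow hWt hWtrow hβnn hβ' hδ
        (fun k i => ⟨(hγ k i).1.le, (hγ k i).2.le⟩) hlam hξ (fun k i => (hlx k i).le)
        (fun k i => (hx0 k i).symm ▸ hxe01 k i) (hs t) (ha · t) (hd · t) (hx · t)
  have hs_anti : ∀ i, Antitone (s · i) := fun i => antitone_nat_of_succ_le fun t =>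
    (hs t i).symm ▸ ((hfeas t).susceptible_succ_mem_Icc hW hWrow hβnn hβ' i).2
  have hs_le : ∀ t i, s t i ≤ 1 - ε := fun t i => hs0 i ▸ hs_anti i (Nat.zero_le t)
  refine ⟨⟨fun i => ?_, ⟨0, hn⟩, ?_⟩, fun t => ⟨⟨0, hn⟩, ?_⟩⟩
  · refine ⟨by simp [hs0, abs_of_pos hε₀], fun k => ?_⟩
    fin_cases k <;> simp [ha10, ha20, hd0, hx0, abs_of_pos hε₀, hε₀.le]
  · simp [hs0, abs_of_pos hε₀]
  · rw [abs_of_nonpos (by linarith [hs_le t ⟨0, hn⟩])]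
    linarith [hs_le t ⟨0, hn⟩]

/-- Proposition 3: the adoption-free equilibrium is not asymptotically stable.
For every `ε ∈ (0,1)`, the initial condition `s(0) = (1−ε)·1`, `a¹(0) = ε·1`,
`a²(0) = d¹(0) = d²(0) = 0`, `x^k(0) = x_e^k` lies at sup-norm distance exactly
`ε` from `y_e`, and the resulting trajectory satisfies
`‖y(t) − y_e‖_∞ ≥ ε` for all `t ≥ 0`. -/
theorem stmt5 {n : ℕ} (hn : 0 < n) (W Wt : Matrix (Fin n) (Fin n) ℝ)
    (β δ γ lam ξ : Fin 2 → Fin n → ℝ) (x0 : Fin 2 → Fin n → ℝ)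
    (s : ℕ → Fin n → ℝ) (a d x : Fin 2 → ℕ → Fin n → ℝ) (ε : ℝ)
    (hε : ε ∈ Set.Ioo (0 : ℝ) 1)
    (hW : ∀ i j, 0 ≤ W i j) (hWrow : ∀ i, ∑ j, W i j = 1)
    (hWt : ∀ i j, 0 ≤ Wt i j) (hWtrow : ∀ i, ∑ j, Wt i j = 1)
    (hβnn : ∀ k i, 0 ≤ β k i) (hβ : ∀ i, 0 < β 0 i + β 1 i ∧ β 0 i + β 1 i < 1)
    (hδ : ∀ k i, 0 ≤ δ k i ∧ δ k i ≤ 1) (hγ : ∀ k i, 0 < γ k i ∧ γ k i < 1)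
    (hlam : ∀ k i, 0 ≤ lam k i) (hξ : ∀ k i, 0 ≤ ξ k i)
    (hlx : ∀ k i, lam k i + ξ k i < 1)
    (hunit : ∀ k : Fin 2, IsUnit (1 - Matrix.diagonal (lam k) * Wt))
    (xe : Fin 2 → Fin n → ℝ)
    (hxe : ∀ k : Fin 2, xe k = (1 - Matrix.diagonal (lam k) * Wt)⁻¹ *ᵥ
      ((1 - Matrix.diagonal (lam k) - Matrix.diagonal (ξ k)) *ᵥ x0 k))
    (hxe01 : ∀ k i, xe k i ∈ Set.Icc (0 : ℝ) 1)
    -- dynamics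
    (hs : ∀ t i, s (t + 1) i =
      s t i - s t i * ∑ k, β k i * x k t i * ∑ j, W i j * a k t j)
    (ha : ∀ (k : Fin 2) (t : ℕ) (i : Fin n), a k (t + 1) i =
      a k t i + β k i * x k t i * s t i * (∑ j, W i j * a k t j)
        - δ k i * a k t i + γ k i * x k t i * d (1 - k) t i)
    (hd : ∀ (k : Fin 2) (t : ℕ) (i : Fin n), d k (t + 1) i =
      d k t i - γ (1 - k) i * x (1 - k) t i * d k t i + δ k i * a k t i)
    (hx : ∀ (k : Fin 2) (t : ℕ) (i : Fin n), x k (t + 1) i =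
      (1 - lam k i - ξ k i) * x k 0 i + lam k i * ∑ j, Wt i j * x k t j
        + ξ k i * ∑ j, W i j * a k t j)
    -- perturbed initial condition
    (hs0 : ∀ i, s 0 i = 1 - ε)
    (ha10 : ∀ i, a 0 0 i = ε) (ha20 : ∀ i, a 1 0 i = 0)
    (hd0 : ∀ (k : Fin 2) (i : Fin n), d k 0 i = 0)
    (hx0 : ∀ (k : Fin 2) (i : Fin n), x k 0 i = xe k i) :
    -- ‖y(0) − y_e‖_∞ = ε : every component deviation is ≤ ε and some equals ε
    ((∀ i : Fin n, |s 0 i - 1| ≤ ε ∧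
        ∀ k : Fin 2, |a k 0 i - 0| ≤ ε ∧ |d k 0 i - 0| ≤ ε ∧ |x k 0 i - xe k i| ≤ ε) ∧
      ∃ i : Fin n, |s 0 i - 1| = ε) ∧
    -- the trajectory never returns ε-close to y_e
    (∀ t : ℕ, ∃ i : Fin n, |s t i - 1| ≥ ε) :=
  stmt5_general hn W Wt β δ γ lam ξ s a d x ε hε hW hWrow hWt hWtrow hβnn hβ hδ hγ hlam hξ hlx xe
    hxe01 hs ha hd hx hs0 ha10 ha20 hd0 hx0
end

section
/- Define the map T: [0,1]^n → ℝ^n by T_i(a) = 1 − (δ_i^{[1]}/δ_i^{[2]}) a_i − δ_i^{[1]} a_i (1/(γ_i^{[1]} x_i^{[1]}(a)) + 1/(γ_i^{[2]} x_i^{[2]}(a))), where x^{[k]}(a) = (I − Λ^{[k]} W̃)^{-1}((I − Λ^{[k]} − Ξ^{[k]}) x^{[k]}(0) + Ξ^{[k]} W a^{[k]}(a)) with a^{[1]}(a) = a and a_i^{[2]}(a) = (δ_i^{[1]}/δ_i^{[2]}) a_i. Then T admits a fixed point in [u, 1] ⊂ [0,1]^n where u_i = max{0, 1 − δ_i^{[1]}/δ_i^{[2]}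 − φ̲_i} and φ̲_i = δ_i^{[1]}(1/(γ_i^{[1]} x_{e,i}^{[1]}) + 1/(γ_i^{[2]} x_{e,i}^{[2]})). -/
/-!
Write `c_i = δ_i^{[1]}/δ_i^{[2]}` and
`φ_i(a) = δ_i^{[1]}(1/(γ_i^{[1]} x_i^{[1]}(a)) + 1/(γ_i^{[2]} x_i^{[2]}(a)))`; then `T a = a`
says `a_i (1 + c_i + φ_i(a)) = 1`. The opinions `x^{[k]}(a)` are monotone in `a` because all
matrices involved are entrywise nonnegative, so `φ` is antitone and `a ↦ (1 + c + φ(a))⁻¹` is a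
monotone self-map of `[0,1]^n`: Knaster–Tarski (in place of Brouwer) gives a fixed point. Since
`x^{[k]}(a) ≥ x_e^{[k]}`, we have `φ(a) ≤ φ̲`, and `a_i = 1 - c_i a_i - a_i φ_i(a) ≥ 1 - c_i - φ̲_i`
puts the fixed point in `[u, 1]`.
-/

open Matrix Set Function

theorem Matrix.monotone_mulVec_of_nonneg {R m n : Type*} [Semiring R] [PartialOrder R]
    [IsOrderedRing R] [Fintype n] {M : Matrix m n R} (hM : ∀ i j, 0 ≤ M i j) :
    Monotone (M *ᵥ ·) :=
  fun _ _ huv i => dotProduct_le_dotProduct_of_nonneg_left huv (hM i)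

theorem Matrix.diagonal_nonneg {R n : Type*} [DecidableEq n] [Zero R] [Preorder R]
    {d : n → R} (hd : 0 ≤ d) (i j : n) : 0 ≤ diagonal d i j := by
  by_cases h : i = j
  · simpa [h] using hd j
  · simp [h]

theorem exists_isFixedPt_of_monotoneOn_Icc {α : Type*} [ConditionallyCompleteLattice α]
    {a b : α} (hab : a ≤ b) {f : α → α} (hf : MonotoneOn f (Icc a b))
    (hmaps : MapsTo f (Icc a b) (Icc a b)) : ∃ x ∈ Icc a b, IsFixedPt f x := by
  have : Fact (a ≤ b) := ⟨hab⟩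
  let F : Icc a b →o Icc a b := ⟨hmaps.restrict f _ _, fun x y hxy => hf x.2 y.2 hxy⟩
  exact ⟨F.lfp, F.lfp.2, congrArg Subtype.val F.map_lfp⟩

theorem exists_mul_one_add_add_eq_one {ι : Type*} {c : ι → ℝ} (hc : ∀ i, 0 ≤ c i)
    {ψ : (ι → ℝ) → ι → ℝ} (hψ : AntitoneOn ψ (Icc 0 1))
    (hψ₀ : ∀ a ∈ Icc 0 1, ∀ i, 0 ≤ ψ a i) :
    ∃ a ∈ Icc (0 : ι → ℝ) 1, ∀ i, a i * (1 + c i + ψ a i) = 1 := by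
  have one_le : ∀ a ∈ Icc (0 : ι → ℝ) 1, ∀ i, 1 ≤ 1 + c i + ψ a i :=
    fun a ha i => by linarith [hc i, hψ₀ a ha i]
  obtain ⟨a, ha, hfix⟩ := exists_isFixedPt_of_monotoneOn_Icc zero_le_one
    (f := fun a i => (1 + c i + ψ a i)⁻¹)
    (fun a ha b hb hab i => inv_anti₀ (by linarith [one_le b hb i]) (by linarith [hψ ha hb hab i]))
    (fun a ha => ⟨fun i => inv_nonneg.2 (by linarith [one_le a ha i]),
      fun i => inv_le_one_of_one_le₀ (one_le a ha i)⟩)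
  refine ⟨a, ha, fun i => ?_⟩
  nth_rewrite 1 [← congrFun hfix i]
  exact inv_mul_cancel₀ (by linarith [one_le a ha i])

theorem one_sub_sub_le_of_mul_one_add_add_eq_one {a c ψ p : ℝ} (ha : a ≤ 1) (hc : 0 ≤ c)
    (hψ : 0 ≤ ψ) (hψp : ψ ≤ p) (h : a * (1 + c + ψ) = 1) : 1 - c - p ≤ a := by
  nlinarith [mul_le_mul_of_nonneg_left ha hc, mul_le_mul_of_nonneg_right ha hψ]

theorem Matrix.monotone_mulVec_add_diagonal_mulVec {R l m n : Type*} [Semiring R]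
    [PartialOrder R] [IsOrderedRing R] [Fintype m] [Fintype n] [DecidableEq m]
    {M : Matrix l m R} {W : Matrix m n R} {ξ : m → R} (hM : ∀ i j, 0 ≤ M i j)
    (hW : ∀ i j, 0 ≤ W i j) (hξ : 0 ≤ ξ) (b : m → R) :
    Monotone fun v => M *ᵥ (b + diagonal ξ *ᵥ (W *ᵥ v)) :=
  (monotone_mulVec_of_nonneg hM).comp <| Monotone.const_add
    ((monotone_mulVec_of_nonneg (diagonal_nonneg hξ)).comp (monotone_mulVec_of_nonneg hW)) b

section Adoption

variable {ι κ : Type*} [Fintype κ] {δ : ι → ℝ} {γ : κ → ι → ℝ}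

variable (δ γ) in
/-- The quantity `φ_i` of the paper, with `y k` the opinion profile for product `k`. -/
noncomputable def adoptionCost (y : κ → ι → ℝ) (i : ι) : ℝ :=
  δ i * ∑ k, 1 / (γ k i * y k i)

theorem adoptionCost_nonneg (hδ : ∀ i, 0 ≤ δ i) (hγ : ∀ k i, 0 < γ k i) {y : κ → ι → ℝ}
    (hy : ∀ k i, 0 < y k i) (i : ι) : 0 ≤ adoptionCost δ γ y i :=
  mul_nonneg (hδ i) <| Finset.sum_nonneg fun k _ => (one_div_pos.2 (mul_pos (hγ k i) (hy k i))).le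

theorem adoptionCost_anti (hδ : ∀ i, 0 ≤ δ i) (hγ : ∀ k i, 0 < γ k i) {y z : κ → ι → ℝ}
    (hy : ∀ k i, 0 < y k i) (hyz : y ≤ z) : adoptionCost δ γ z ≤ adoptionCost δ γ y := by
  intro i
  unfold adoptionCost
  gcongr with k
  · exact hδ i
  · exact mul_pos (hγ k i) (hy k i)
  · exact (hγ k i).le
  · exact hyz k i

theorem exists_fixedPt_adoption {c : ι → ℝ} (hc : ∀ i, 0 ≤ c i) (hδ : ∀ i, 0 ≤ δ i)
    (hγ : ∀ k i, 0 < γ k i) {e : κ → ι → ℝ} (he : ∀ k i, 0 < e k i)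
    {x : κ → (ι → ℝ) → ι → ℝ} (hx : ∀ k, MonotoneOn (x k) (Ici 0))
    (hex : ∀ k a, 0 ≤ a → e k ≤ x k a) :
    ∃ a ∈ Icc (0 : ι → ℝ) 1, ∀ i, max 0 (1 - c i - adoptionCost δ γ e i) ≤ a i ∧
      a i = 1 - c i * a i - a i * adoptionCost δ γ (x · a) i := by
  have hxpos : ∀ a, 0 ≤ a → ∀ k i, 0 < x k a i :=
    fun a ha k i => (he k i).trans_le (hex k a ha i)
  obtain ⟨a, ha, hfix⟩ := exists_mul_one_add_add_eq_one hc
    (ψ := fun a => adoptionCost δ γ (x · a))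
    (fun a ha b hb hab => adoptionCost_anti hδ hγ (hxpos a ha.1) fun k => hx k ha.1 hb.1 hab)
    (fun a ha => adoptionCost_nonneg hδ hγ (hxpos a ha.1))
  refine ⟨a, ha, fun i => ⟨max_le (ha.1 i) ?_, by linear_combination hfix i⟩⟩
  exact one_sub_sub_le_of_mul_one_add_add_eq_one (ha.2 i) (hc i)
    (adoptionCost_nonneg hδ hγ (hxpos a ha.1) i)
    (adoptionCost_anti hδ hγ he (fun k => hex k a ha.1) i) (hfix i)

end Adoption

theorem stmt9_general {n : ℕ} (W Wt : Matrix (Fin n) (Fin n) ℝ)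
    (δ γ lam ξ : Fin 2 → Fin n → ℝ) (x0 : Fin 2 → Fin n → ℝ)
    (hW : ∀ i j, 0 ≤ W i j)
    (hδ : ∀ k i, 0 < δ k i ∧ δ k i ≤ 1) (hγ : ∀ k i, 0 < γ k i ∧ γ k i < 1)
    (hξ : ∀ k i, 0 < ξ k i)
    (hMnn : ∀ (k : Fin 2) (i j : Fin n), 0 ≤ (1 - Matrix.diagonal (lam k) * Wt)⁻¹ i j)
    -- the adoption-free opinions x_e, entrywise positive (Assumption 1)
    (xe : Fin 2 → Fin n → ℝ)
    (hxe : ∀ k : Fin 2, xe k = (1 - Matrix.diagonal (lam k) * Wt)⁻¹ *ᵥ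
      ((1 - Matrix.diagonal (lam k) - Matrix.diagonal (ξ k)) *ᵥ x0 k))
    (hxepos : ∀ k i, 0 < xe k i)
    -- the adoption vectors as functions of a = a^{[1]}
    (avec : Fin 2 → (Fin n → ℝ) → (Fin n → ℝ))
    (havec1 : ∀ a, avec 0 a = a)
    (havec2 : ∀ a i, avec 1 a i = (δ 0 i / δ 1 i) * a i)
    -- the equilibrium opinion map x^{[k]}(a)
    (xfun : Fin 2 → (Fin n → ℝ) → (Fin n → ℝ))
    (hxfun : ∀ (k : Fin 2) (a : Fin n → ℝ), xfun k a =
      (1 - Matrix.diagonal (lam k) * Wt)⁻¹ *ᵥ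
        ((1 - Matrix.diagonal (lam k) - Matrix.diagonal (ξ k)) *ᵥ x0 k
          + Matrix.diagonal (ξ k) *ᵥ (W *ᵥ avec k a)))
    -- the fixed-point map T
    (T : (Fin n → ℝ) → (Fin n → ℝ))
    (hT : ∀ (a : Fin n → ℝ) (i : Fin n), T a i =
      1 - (δ 0 i / δ 1 i) * a i
        - δ 0 i * a i * (1 / (γ 0 i * xfun 0 a i) + 1 / (γ 1 i * xfun 1 a i)))
    -- the lower corner u of the invariant box
    (u : Fin n → ℝ)
    (hu : ∀ i, u i = max 0 (1 - δ 0 i / δ 1 i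
      - δ 0 i * (1 / (γ 0 i * xe 0 i) + 1 / (γ 1 i * xe 1 i)))) :
    ∃ a : Fin n → ℝ, (∀ i, u i ≤ a i ∧ a i ≤ 1) ∧ T a = a := by
  have hratio : ∀ i, 0 ≤ δ 0 i / δ 1 i := fun i => (div_pos (hδ 0 i).1 (hδ 1 i).1).le
  have havec : ∀ k, Monotone (avec k) ∧ avec k 0 = 0 := by
    refine Fin.forall_fin_two.2 ⟨⟨fun a b hab => by simpa [havec1] using hab, havec1 0⟩, ?_, ?_⟩
    · exact fun a b hab i => by simpa [havec2] using mul_le_mul_of_nonneg_left (hab i) (hratio i)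
    · exact funext fun i => by simp [havec2]
  have hxmono : ∀ k, Monotone (xfun k) := fun k => by
    rw [funext (hxfun k)]
    exact (monotone_mulVec_add_diagonal_mulVec (hMnn k) hW (fun i => (hξ k i).le) _).comp
      (havec k).1
  have hxe_le : ∀ k a, 0 ≤ a → xe k ≤ xfun k a := fun k a ha => by
    simpa [hxfun, hxe, (havec k).2] using hxmono k ha
  obtain ⟨a, ha, hfix⟩ := exists_fixedPt_adoption (δ := δ 0) hratio (fun i => (hδ 0 i).1.le)
    (fun k i => (hγ k i).1) hxepos (fun k => (hxmono k).monotoneOn _) hxe_le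
  simp only [adoptionCost, Fin.sum_univ_two] at hfix
  refine ⟨a, fun i => ⟨(hu i).trans_le (hfix i).1, ha.2 i⟩, funext fun i => ?_⟩
  rw [hT]
  linear_combination -(hfix i).2

/-- Existence of a fixed point of the adoption fixed-point map `T` in the box
`[u, 1] ⊆ [0,1]^n`, where `u_i = max{0, 1 − δ_i^{[1]}/δ_i^{[2]} − φ̲_i}` and
`φ̲_i = δ_i^{[1]}(1/(γ_i^{[1]} x_{e,i}^{[1]}) + 1/(γ_i^{[2]} x_{e,i}^{[2]}))`. -/
theorem stmt9 {n : ℕ} (W Wt : Matrix (Fin n) (Fin n) ℝ)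
    (δ γ lam ξ : Fin 2 → Fin n → ℝ) (x0 : Fin 2 → Fin n → ℝ)
    (hW : ∀ i j, 0 ≤ W i j) (hWrow : ∀ i, ∑ j, W i j = 1)
    (hWt : ∀ i j, 0 ≤ Wt i j) (hWtrow : ∀ i, ∑ j, Wt i j = 1)
    (hδ : ∀ k i, 0 < δ k i ∧ δ k i ≤ 1) (hγ : ∀ k i, 0 < γ k i ∧ γ k i < 1)
    (hlam : ∀ k i, 0 ≤ lam k i) (hξ : ∀ k i, 0 < ξ k i)
    (hlx : ∀ k i, lam k i + ξ k i < 1)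
    (hunit : ∀ k : Fin 2, IsUnit (1 - Matrix.diagonal (lam k) * Wt))
    (hMnn : ∀ (k : Fin 2) (i j : Fin n), 0 ≤ (1 - Matrix.diagonal (lam k) * Wt)⁻¹ i j)
    -- the adoption-free opinions x_e, entrywise positive (Assumption 1)
    (xe : Fin 2 → Fin n → ℝ)
    (hxe : ∀ k : Fin 2, xe k = (1 - Matrix.diagonal (lam k) * Wt)⁻¹ *ᵥ
      ((1 - Matrix.diagonal (lam k) - Matrix.diagonal (ξ k)) *ᵥ x0 k))
    (hxepos : ∀ k i, 0 < xe k i)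
    -- the adoption vectors as functions of a = a^{[1]}
    (avec : Fin 2 → (Fin n → ℝ) → (Fin n → ℝ))
    (havec1 : ∀ a, avec 0 a = a)
    (havec2 : ∀ a i, avec 1 a i = (δ 0 i / δ 1 i) * a i)
    -- the equilibrium opinion map x^{[k]}(a)
    (xfun : Fin 2 → (Fin n → ℝ) → (Fin n → ℝ))
    (hxfun : ∀ (k : Fin 2) (a : Fin n → ℝ), xfun k a =
      (1 - Matrix.diagonal (lam k) * Wt)⁻¹ *ᵥ
        ((1 - Matrix.diagonal (lam k) - Matrix.diagonal (ξ k)) *ᵥ x0 k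
          + Matrix.diagonal (ξ k) *ᵥ (W *ᵥ avec k a)))
    -- the fixed-point map T
    (T : (Fin n → ℝ) → (Fin n → ℝ))
    (hT : ∀ (a : Fin n → ℝ) (i : Fin n), T a i =
      1 - (δ 0 i / δ 1 i) * a i
        - δ 0 i * a i * (1 / (γ 0 i * xfun 0 a i) + 1 / (γ 1 i * xfun 1 a i)))
    -- the lower corner u of the invariant box
    (u : Fin n → ℝ)
    (hu : ∀ i, u i = max 0 (1 - δ 0 i / δ 1 i
      - δ 0 i * (1 / (γ 0 i * xe 0 i) + 1 / (γ 1 i * xe 1 i)))) :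
    ∃ a : Fin n → ℝ, (∀ i, u i ≤ a i ∧ a i ≤ 1) ∧ T a = a :=
  stmt9_general W Wt δ γ lam ξ x0 hW hδ hγ hξ hMnn xe hxe hxepos avec havec1 havec2 xfun hxfun T hT
    u hu
end

section
/- Suppose T: [u, 1] → [u, 1] is a continuous monotone map (a ≥ b, a ≠ b implies T(a) > T(b)) satisfying the strict sub-homogeneity property T_i(αa) < α T_i(a) + (1 − α)(1 − φ_i(a) a_i) with 1 − φ_i(a) a_i > 0 for all α > 1 and a in the domain. Then T has at most one fixed point in [u, 1]. -/
/-!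
By Knaster–Tarski, `T` has a greatest fixed point in the box `[u, 1]`, so it suffices to show
that two fixed points `q ≤ p` coincide. If not, strict monotonicity gives `q i < p i` for all
`i`, hence `q ≤ m < 1`. Every point `q ⊔ β • p` of the path from `q` to `p` is then a
subsolution `x ≤ T x`: this holds at `β = 1`, and strict sub-homogeneity with a factor
`1 < α ≤ 1 / m`, small enough to keep `α • x` in the box, carries it from `α β` down to `β`,
strictly in the coordinates where `q i ≤ β * p i`. At `β = min (q i / p i)` the path point is
`q` itself, and the strict inequality contradicts `T q = q`.
-/

open Set Function

theorem MonotoneOn.exists_greatest_isFixedPt {α : Type*} [ConditionallyCompleteLattice α]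
    {T : α → α} {u v : α} (huv : u ≤ v) (hT : MonotoneOn T (Icc u v))
    (hmaps : MapsTo T (Icc u v) (Icc u v)) :
    ∃ g ∈ Icc u v, IsFixedPt T g ∧ ∀ a ∈ Icc u v, IsFixedPt T a → a ≤ g := by
  have : Fact (u ≤ v) := ⟨huv⟩
  let f : Icc u v →o Icc u v := ⟨hmaps.restrict, fun a b hab => hT a.2 b.2 hab⟩
  refine ⟨f.gfp, f.gfp.2, congrArg Subtype.val f.isFixedPt_gfp, fun a ha haT => ?_⟩
  exact f.le_gfp (a := ⟨a, ha⟩) (le_of_eq (Subtype.ext haT.symm))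

variable {ι : Type*}

def StrictSubhomogeneousOn (T : (ι → ℝ) → ι → ℝ) (D : Set (ι → ℝ)) : Prop :=
  ∀ α : ℝ, 1 < α → ∀ a ∈ D, ∀ i, T (α • a) i < α * T a i

theorem strictSubhomogeneousOn_of_lt_add {T : (ι → ℝ) → ι → ℝ} {D : Set (ι → ℝ)}
    {c : (ι → ℝ) → ι → ℝ} (hc : ∀ a ∈ D, ∀ i, 0 < c a i)
    (hT : ∀ α : ℝ, 1 < α → ∀ a ∈ D, ∀ i, T (α • a) i < α * T a i + (1 - α) * c a i) :
    StrictSubhomogeneousOn T D := fun α hα a ha i => by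
  nlinarith [hT α hα a ha i, hc a ha i]

theorem monotoneOn_of_forall_lt {T : (ι → ℝ) → ι → ℝ} {D : Set (ι → ℝ)}
    (hT : ∀ a b, a ∈ D → b ∈ D → b ≤ a → b ≠ a → ∀ i, T b i < T a i) :
    MonotoneOn T D := by
  intro b hb a ha hba
  rcases eq_or_ne b a with rfl | hne
  · exact le_rfl
  · exact fun i => (hT a b ha hb hba hne i).le

theorem StrictSubhomogeneousOn.lt_apply_of_le_smul {T : (ι → ℝ) → ι → ℝ} {D : Set (ι → ℝ)}
    (hT : StrictSubhomogeneousOn T D) (hmono : MonotoneOn T D) {α : ℝ} {x y : ι → ℝ}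
    (hα : 1 < α) (hx : x ∈ D) (hαx : α • x ∈ D) (hy : y ∈ D) (hyT : y ≤ T y)
    (hyx : y ≤ α • x) {i : ι} (hi : α * x i ≤ y i) : x i < T x i := by
  have : α * x i < α * T x i := calc
    α * x i ≤ y i := hi
    _ ≤ T y i := hyT i
    _ ≤ T (α • x) i := hmono hy hαx hyx i
    _ < α * T x i := hT α hα x hx i
  exact lt_of_mul_lt_mul_left this (by linarith)

section Box

variable {u p q : ι → ℝ}

theorem smul_mem_Icc_of_one_le (hu : 0 ≤ u) (hq : q ∈ Icc u 1) {α : ℝ} (hα : 1 ≤ α)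
    (hαq : ∀ j, α * q j ≤ 1) : α • q ∈ Icc u 1 :=
  ⟨fun j => (hq.1 j).trans (le_mul_of_one_le_left ((hu j).trans (hq.1 j)) hα), hαq⟩

theorem sup_smul_mem_Icc (hu : 0 ≤ u) (hq : q ∈ Icc u 1) (hp : p ∈ Icc u 1) {β : ℝ}
    (hβ : β ≤ 1) : q ⊔ β • p ∈ Icc u 1 :=
  ⟨hq.1.trans le_sup_left,
    sup_le hq.2 fun j => mul_le_one₀ hβ ((hu j).trans (hp.1 j)) (hp.2 j)⟩

end Box

section Path

variable {T : (ι → ℝ) → ι → ℝ} {u p q : ι → ℝ} {m : ℝ}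

theorem lt_apply_sup_smul (hT : StrictSubhomogeneousOn T (Icc u 1))
    (hmono : MonotoneOn T (Icc u 1)) (hu : 0 ≤ u) (hq : q ∈ Icc u 1) (hp : p ∈ Icc u 1)
    (hqm : ∀ j, q j ≤ m) {α β : ℝ} (hα : 1 < α) (hαβ : α * β ≤ 1) (hαm : α * m ≤ 1)
    (hP : q ⊔ (α * β) • p ≤ T (q ⊔ (α * β) • p)) {i : ι} (hi : q i ≤ β * p i) :
    (q ⊔ β • p) i < T (q ⊔ β • p) i := by
  have hq₀ : 0 ≤ q := hu.trans hq.1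
  have hp₀ : 0 ≤ p := hu.trans hp.1
  have hβ : β ≤ 1 := by nlinarith
  refine hT.lt_apply_of_le_smul hmono hα (sup_smul_mem_Icc hu hq hp hβ)
    (smul_mem_Icc_of_one_le hu (sup_smul_mem_Icc hu hq hp hβ) hα.le fun j => ?_)
    (sup_smul_mem_Icc hu hq hp hαβ) hP (fun j => ?_) ?_
  · show α * max (q j) (β * p j) ≤ 1
    rw [mul_max_of_nonneg _ _ (by linarith), ← mul_assoc]
    exact max_le (by nlinarith [hqm j]) (mul_le_one₀ hαβ (hp₀ j) (hp.2 j))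
  · show max (q j) (α * β * p j) ≤ α * max (q j) (β * p j)
    rw [mul_max_of_nonneg _ _ (by linarith), ← mul_assoc]
    exact max_le_max (le_mul_of_one_le_left (hq₀ j) hα.le) le_rfl
  · show α * max (q i) (β * p i) ≤ max (q i) (α * β * p i)
    rw [max_eq_right hi, ← mul_assoc]
    exact le_max_right _ _

theorem sup_smul_le_apply_of_le_smul (hT : StrictSubhomogeneousOn T (Icc u 1))
    (hmono : MonotoneOn T (Icc u 1)) (hu : 0 ≤ u) (hq : q ∈ Icc u 1) (hp : p ∈ Icc u 1)
    (hqT : IsFixedPt T q) (hqm : ∀ j, q j ≤ m) {α β : ℝ} (hα : 1 < α) (hαβ : α * β ≤ 1)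
    (hαm : α * m ≤ 1) (hP : q ⊔ (α * β) • p ≤ T (q ⊔ (α * β) • p)) :
    q ⊔ β • p ≤ T (q ⊔ β • p) := by
  intro i
  rcases le_or_gt (q i) (β * p i) with hi | hi
  · exact (lt_apply_sup_smul hT hmono hu hq hp hqm hα hαβ hαm hP hi).le
  · have hβ : β ≤ 1 := by nlinarith
    calc (q ⊔ β • p) i = T q i := by rw [hqT.eq]; exact max_eq_left hi.le
      _ ≤ T (q ⊔ β • p) i := hmono hq (sup_smul_mem_Icc hu hq hp hβ) le_sup_left i

theorem exists_one_lt_mul_le_one {β m : ℝ} (hβ : β < 1) (hm₀ : 0 < m) (hm₁ : m < 1) :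
    ∃ α : ℝ, 1 < α ∧ α * β ≤ 1 ∧ α * m ≤ 1 ∧ min (β / m) 1 ≤ α * β := by
  have hM₀ : 0 < max β m := lt_max_of_lt_right hm₀
  refine ⟨(max β m)⁻¹, one_lt_inv₀ hM₀ |>.mpr (max_lt hβ hm₁), ?_, ?_, ?_⟩
  · exact inv_mul_le_one_of_le₀ (le_max_left _ _) hM₀.le
  · exact inv_mul_le_one_of_le₀ (le_max_right _ _) hM₀.le
  · rcases le_total β m with h | h
    · rw [max_eq_right h, inv_mul_eq_div]
      exact min_le_left _ _
    · rw [max_eq_left h, inv_mul_cancel₀ (hm₀.trans_le h).ne']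
      exact min_le_right _ _

theorem sup_smul_le_apply (hT : StrictSubhomogeneousOn T (Icc u 1))
    (hmono : MonotoneOn T (Icc u 1)) (hu : 0 ≤ u) (hq : q ∈ Icc u 1) (hp : p ∈ Icc u 1)
    (hqT : IsFixedPt T q) (hpT : IsFixedPt T p) (hqp : q ≤ p) (hqm : ∀ j, q j ≤ m)
    (hm₀ : 0 < m) (hm₁ : m < 1) {β : ℝ} (hβ₀ : 0 ≤ β) (hβ₁ : β ≤ 1) :
    q ⊔ β • p ≤ T (q ⊔ β • p) := by
  suffices h : ∀ k : ℕ, ∀ β ≤ 1, m ^ k ≤ β → q ⊔ β • p ≤ T (q ⊔ β • p) by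
    rcases hβ₀.eq_or_lt with rfl | hβ₀
    · rw [zero_smul, sup_eq_left.mpr (hu.trans hq.1), hqT.eq]
    obtain ⟨k, hk⟩ := exists_pow_lt_of_lt_one hβ₀ hm₁
    exact h k β hβ₁ hk.le
  have hp₁ : q ⊔ (1 : ℝ) • p ≤ T (q ⊔ (1 : ℝ) • p) := by
    rw [one_smul, sup_eq_right.mpr hqp, hpT.eq]
  intro k
  induction k with
  | zero =>
    intro β hβ₁ hβ
    rwa [le_antisymm hβ₁ (by simpa using hβ)]
  | succ k ih =>
    intro β hβ₁ hβ
    rcases hβ₁.eq_or_lt with rfl | hβ₁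
    · exact hp₁
    obtain ⟨α, hα, hαβ, hαm, hmin⟩ := exists_one_lt_mul_le_one hβ₁ hm₀ hm₁
    refine sup_smul_le_apply_of_le_smul hT hmono hu hq hp hqT hqm hα hαβ hαm (ih _ hαβ ?_)
    refine le_trans (le_min ?_ (pow_le_one₀ hm₀.le hm₁.le)) hmin
    rwa [le_div_iff₀ hm₀, ← pow_succ]

theorem eq_of_le_of_isFixedPt [Finite ι] (hT : StrictSubhomogeneousOn T (Icc u 1))
    (hstrict : ∀ a b, a ∈ Icc u 1 → b ∈ Icc u 1 → b ≤ a → b ≠ a → ∀ i, T b i < T a i)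
    (hu : 0 ≤ u) (hq : q ∈ Icc u 1) (hp : p ∈ Icc u 1) (hqT : IsFixedPt T q)
    (hpT : IsFixedPt T p) (hqp : q ≤ p) : q = p := by
  by_contra hne
  have hmono := monotoneOn_of_forall_lt hstrict
  have hlt : ∀ i, q i < p i := by simpa [hqT.eq, hpT.eq] using hstrict p q hp hq hqp hne
  have hp₀ : ∀ i, 0 < p i := fun i => ((hu i).trans (hq.1 i)).trans_lt (hlt i)
  obtain ⟨i, -⟩ := Function.ne_iff.mp hne
  have : Nonempty ι := ⟨i⟩
  obtain ⟨j₀, hj₀⟩ := Finite.exists_max q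
  set m := max (q j₀) (1 / 2)
  have hqm : ∀ j, q j ≤ m := fun j => (hj₀ j).trans (le_max_left _ _)
  have hm₀ : 0 < m := lt_max_of_lt_right one_half_pos
  have hm₁ : m < 1 := max_lt ((hlt j₀).trans_le (hp.2 j₀)) one_half_lt_one
  obtain ⟨i₀, hi₀⟩ := Finite.exists_min fun i => q i / p i
  set β := q i₀ / p i₀
  have hβ₀ : 0 ≤ β := div_nonneg ((hu i₀).trans (hq.1 i₀)) (hp₀ i₀).le
  have hβ₁ : β < 1 := (div_lt_one (hp₀ i₀)).mpr (hlt i₀)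
  have hβq : q ⊔ β • p = q := sup_eq_left.mpr fun i => (le_div_iff₀ (hp₀ i)).mp (hi₀ i)
  obtain ⟨α, hα, hαβ, hαm, -⟩ := exists_one_lt_mul_le_one hβ₁ hm₀ hm₁
  have hP := sup_smul_le_apply hT hmono hu hq hp hqT hpT hqp hqm hm₀ hm₁
    (mul_nonneg (by linarith) hβ₀) hαβ
  have hq_lt := lt_apply_sup_smul hT hmono hu hq hp hqm hα hαβ hαm hP (i := i₀)
    (div_mul_cancel₀ _ (hp₀ i₀).ne').ge
  rw [hβq, hqT.eq] at hq_lt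
  exact lt_irrefl _ hq_lt

end Path

theorem stmt13_general {n : ℕ} (u : Fin n → ℝ) (hu : ∀ i, u i ∈ Set.Icc (0 : ℝ) 1)
    (T : (Fin n → ℝ) → (Fin n → ℝ)) (φ : (Fin n → ℝ) → Fin n → ℝ)
    (hmaps : Set.MapsTo T (Set.Icc u 1) (Set.Icc u 1))
    -- monotonicity: a ≥ b, a ≠ b implies T(a) > T(b) entrywise
    (hmono : ∀ a b : Fin n → ℝ, a ∈ Set.Icc u 1 → b ∈ Set.Icc u 1 →
      b ≤ a → b ≠ a → ∀ i, T b i < T a i)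
    (hφ : ∀ a : Fin n → ℝ, a ∈ Set.Icc u 1 → ∀ i, 0 < 1 - φ a i * a i)
    -- strict sub-homogeneity
    (hsub : ∀ (α : ℝ), 1 < α → ∀ a : Fin n → ℝ, a ∈ Set.Icc u 1 → ∀ i,
      T (α • a) i < α * T a i + (1 - α) * (1 - φ a i * a i)) :
    ∀ a b : Fin n → ℝ, a ∈ Set.Icc u 1 → b ∈ Set.Icc u 1 →
      T a = a → T b = b → a = b := by
  intro a b ha hb haT hbT
  have hu₀ : 0 ≤ u := fun i => (hu i).1
  have hT : StrictSubhomogeneousOn T (Icc u 1) := strictSubhomogeneousOn_of_lt_add hφ hsub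
  obtain ⟨g, hg, hgT, hge⟩ := (monotoneOn_of_forall_lt hmono).exists_greatest_isFixedPt
    (ha.1.trans ha.2) hmaps
  rw [eq_of_le_of_isFixedPt hT hmono hu₀ ha hg haT hgT (hge a ha haT),
    eq_of_le_of_isFixedPt hT hmono hu₀ hb hg hbT hgT (hge b hb hbT)]

/-- Abstract uniqueness lemma: a continuous monotone map `T : [u,1] → [u,1]`
satisfying the strict sub-homogeneity property
`T_i(αa) < α T_i(a) + (1 − α)(1 − φ_i(a) a_i)` with `1 − φ_i(a) a_i > 0`
for all `α > 1` has at most one fixed point in `[u,1]`. -/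
theorem stmt13 {n : ℕ} (u : Fin n → ℝ) (hu : ∀ i, u i ∈ Set.Icc (0 : ℝ) 1)
    (T : (Fin n → ℝ) → (Fin n → ℝ)) (φ : (Fin n → ℝ) → Fin n → ℝ)
    (hcont : ContinuousOn T (Set.Icc u 1))
    (hmaps : Set.MapsTo T (Set.Icc u 1) (Set.Icc u 1))
    -- monotonicity: a ≥ b, a ≠ b implies T(a) > T(b) entrywise
    (hmono : ∀ a b : Fin n → ℝ, a ∈ Set.Icc u 1 → b ∈ Set.Icc u 1 →
      b ≤ a → b ≠ a → ∀ i, T b i < T a i)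
    (hφ : ∀ a : Fin n → ℝ, a ∈ Set.Icc u 1 → ∀ i, 0 < 1 - φ a i * a i)
    -- strict sub-homogeneity
    (hsub : ∀ (α : ℝ), 1 < α → ∀ a : Fin n → ℝ, a ∈ Set.Icc u 1 → ∀ i,
      T (α • a) i < α * T a i + (1 - α) * (1 - φ a i * a i)) :
    ∀ a b : Fin n → ℝ, a ∈ Set.Icc u 1 → b ∈ Set.Icc u 1 →
      T a = a → T b = b → a = b :=
  stmt13_general u hu T φ hmaps hmono hφ hsub
end

section
/- Let y* be any equilibrium of the coupled adoption-opinion dynamics with strictly positive equilibrium opinions x^{[k]*} > 0 and with W irreducible. If s_i* = 0 for at least one node i, then s_j* = 0 for all nodes j. Equivalently, no partial-adoption equilibrium exists. -/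
/-!
At a node `j` with `s j > 0` the susceptible equation forces the `W`-weighted adoption seen
from `j` to vanish, so every out-neighbour `p` of `j` has `a p = 0`, hence `d p = 0` by the
dissatisfied equation and `s p = 1` by normalization. Positivity of `s` therefore spreads along
the edges of `W`, and by irreducibility it reaches every node.
-/

open Finset

namespace Matrix

variable {n R : Type*} [Fintype n] [DecidableEq n] [Ring R] [LinearOrder R] [IsOrderedRing R]
  [PosMulStrictMono R] [Nontrivial R]

theorem induction_of_pow_apply_pos {A : Matrix n n R} (hA : ∀ i j, 0 ≤ A i j) {P : n → Prop}
    (hP : ∀ i j, P i → 0 < A i j → P j) {k : ℕ} {i j : n} (hk : 0 < (A ^ k) i j) (hi : P i) :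
    P j := by
  let := toQuiver A
  obtain ⟨⟨p, -⟩⟩ := (pow_apply_pos_iff_nonempty_path hA k i j).mp hk
  clear hk
  induction p with
  | nil => exact hi
  | cons _ e ih => exact hP _ _ ih e.down

end Matrix

section Equilibrium

variable {ι : Type*} [Fintype ι] {W : Matrix ι ι ℝ} {β γ δ x a d : Fin 2 → ι → ℝ} {s : ι → ℝ}

theorem weighted_adoption_eq_zero_of_susceptible_pos (hW : ∀ i j, 0 ≤ W i j)
    (hβx : ∀ k j, 0 < β k j * x k j) (hann : ∀ k i, 0 ≤ a k i) {j : ι}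
    (heqs : 0 = - s j *
      (β 0 j * x 0 j * (∑ m, W j m * a 0 m) + β 1 j * x 1 j * (∑ m, W j m * a 1 m)))
    (hsj : 0 < s j) (k : Fin 2) : ∑ m, W j m * a k m = 0 := by
  have hsum_nonneg (k : Fin 2) : 0 ≤ β k j * x k j * ∑ m, W j m * a k m :=
    mul_nonneg (hβx k j).le (sum_nonneg fun m _ => mul_nonneg (hW j m) (hann k m))
  have hbracket : β 0 j * x 0 j * (∑ m, W j m * a 0 m)
      + β 1 j * x 1 j * (∑ m, W j m * a 1 m) = 0 := by
    simpa [hsj.ne'] using heqs.symm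
  have hterm : β k j * x k j * ∑ m, W j m * a k m = 0 := by
    rw [add_eq_zero_iff_of_nonneg (hsum_nonneg 0) (hsum_nonneg 1)] at hbracket
    fin_cases k
    exacts [hbracket.1, hbracket.2]
  exact (mul_eq_zero.mp hterm).resolve_left (hβx k j).ne'

theorem susceptible_pos_of_adj (hW : ∀ i j, 0 ≤ W i j)
    (hβx : ∀ k j, 0 < β k j * x k j) (hγ : ∀ k i, 0 < γ k i)
    (hxpos : ∀ k i, 0 < x k i) (hann : ∀ k i, 0 ≤ a k i)
    (heqs : ∀ j, 0 = - s j *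
      (β 0 j * x 0 j * (∑ m, W j m * a 0 m) + β 1 j * x 1 j * (∑ m, W j m * a 1 m)))
    (heqd : ∀ k i, 0 = - γ (1 - k) i * x (1 - k) i * d k i + δ k i * a k i)
    (hnorm : ∀ i, s i + ∑ k, (a k i + d k i) = 1)
    {j p : ι} (hsj : 0 < s j) (hWjp : 0 < W j p) : 0 < s p := by
  have ha (k : Fin 2) : a k p = 0 := by
    have hsum := weighted_adoption_eq_zero_of_susceptible_pos hW hβx hann (heqs j) hsj k
    have := (sum_eq_zero_iff_of_nonneg fun m _ => mul_nonneg (hW j m) (hann k m)).mp hsum p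
      (mem_univ p)
    exact (mul_eq_zero.mp this).resolve_left hWjp.ne'
  have hd (k : Fin 2) : d k p = 0 := by
    have hcoef : γ (1 - k) p * x (1 - k) p ≠ 0 := (mul_pos (hγ _ p) (hxpos _ p)).ne'
    have heq := heqd k p
    rw [ha k, mul_zero] at heq
    exact (mul_eq_zero.mp (by linarith)).resolve_left hcoef
  have := hnorm p
  simp only [Fin.sum_univ_two, ha, hd, add_zero] at this
  linarith

end Equilibrium

theorem stmt15_general {n : ℕ} (W : Matrix (Fin n) (Fin n) ℝ)
    (β δ γ x a d : Fin 2 → Fin n → ℝ) (s : Fin n → ℝ)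
    (hW : ∀ i j, 0 ≤ W i j)
    -- W irreducible: its directed graph is strongly connected
    (hirr : ∀ i j : Fin n, ∃ m : ℕ, 0 < m ∧ 0 < (W ^ m) i j)
    (hβx : ∀ (k : Fin 2) (j : Fin n), 0 < β k j * x k j)
    (hγ : ∀ k i, 0 < γ k i ∧ γ k i < 1)
    (hxpos : ∀ k i, 0 < x k i)
    (hsnn : ∀ i, 0 ≤ s i) (hann : ∀ k i, 0 ≤ a k i)
    -- equilibrium equation for the susceptibles
    (heqs : ∀ j : Fin n, 0 = - s j *
      (β 0 j * x 0 j * (∑ m, W j m * a 0 m) + β 1 j * x 1 j * (∑ m, W j m * a 1 m)))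
    -- equilibrium equation for the dissatisfied
    (heqd : ∀ (k : Fin 2) (i : Fin n),
      0 = - γ (1 - k) i * x (1 - k) i * d k i + δ k i * a k i)
    -- normalization
    (hnorm : ∀ i, s i + ∑ k, (a k i + d k i) = 1) :
    (∃ i, s i = 0) → ∀ j, s j = 0 := by
  rintro ⟨i, hi⟩ j
  by_contra hj
  obtain ⟨m, -, hm⟩ := hirr j i
  have hsi : 0 < s i :=
    Matrix.induction_of_pow_apply_pos hW (P := fun p => 0 < s p)
      (fun _ _ => susceptible_pos_of_adj hW hβx (fun k i => (hγ k i).1) hxpos hann heqs heqd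
        hnorm) hm
      ((hsnn j).lt_of_ne' hj)
  exact hsi.ne' hi

/-- Proposition 6 (no partial-adoption equilibria): at any equilibrium with
strictly positive opinions and `W` irreducible, if `s_i* = 0` for at least one
node then `s_j* = 0` for all nodes. -/
theorem stmt15 {n : ℕ} (W : Matrix (Fin n) (Fin n) ℝ)
    (β δ γ x a d : Fin 2 → Fin n → ℝ) (s : Fin n → ℝ)
    (hW : ∀ i j, 0 ≤ W i j) (hWrow : ∀ i, ∑ j, W i j = 1)
    -- W irreducible: its directed graph is strongly connected
    (hirr : ∀ i j : Fin n, ∃ m : ℕ, 0 < m ∧ 0 < (W ^ m) i j)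
    (hβx : ∀ (k : Fin 2) (j : Fin n), 0 < β k j * x k j)
    (hδ : ∀ k i, 0 < δ k i ∧ δ k i ≤ 1) (hγ : ∀ k i, 0 < γ k i ∧ γ k i < 1)
    (hxpos : ∀ k i, 0 < x k i)
    (hsnn : ∀ i, 0 ≤ s i) (hann : ∀ k i, 0 ≤ a k i) (hdnn : ∀ k i, 0 ≤ d k i)
    -- equilibrium equation for the susceptibles
    (heqs : ∀ j : Fin n, 0 = - s j *
      (β 0 j * x 0 j * (∑ m, W j m * a 0 m) + β 1 j * x 1 j * (∑ m, W j m * a 1 m)))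
    -- equilibrium equation for the adopters
    (heqa : ∀ (k : Fin 2) (i : Fin n),
      0 = β k i * x k i * s i * (∑ j, W i j * a k j) - δ k i * a k i
        + γ k i * x k i * d (1 - k) i)
    -- equilibrium equation for the dissatisfied
    (heqd : ∀ (k : Fin 2) (i : Fin n),
      0 = - γ (1 - k) i * x (1 - k) i * d k i + δ k i * a k i)
    -- normalization
    (hnorm : ∀ i, s i + ∑ k, (a k i + d k i) = 1) :
    (∃ i, s i = 0) → ∀ j, s j = 0 :=
  stmt15_general W β δ γ x a d s hW hirr hβx hγ hxpos hsnn hann heqs heqd hnorm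
end
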